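/- arXiv:math/0505674 — 4 statements merged into one kernel-verified Lean document; each statement's English description precedes it below -/
import Mathlib

section
/- Let F : Ω × ℝ^k → ℝ be jointly continuous, let f : Ω → ℝ be continuous, and suppose f(x₀) lies in the interior of the range {F(x₀, ξ) : ξ ∈ ℝ^k} for a given x₀ ∈ Ω. Then for every ε > 0 there exist δ > 0 and a polynomial map P : ℝⁿ → ℝ^k (each coordinate a polynomial) such that for all x ∈ Ω with ‖x − x₀‖ ≤ δ, one has f(x) − ε ≤ F(x, P(x)) ≤ f(x). -/
/-! Constant polynomials suffice. Since `f x₀` is interior to the range of `F (x₀, ·)`, some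
`F (x₀, ξ₀)` lies strictly between `f x₀ - ε` and `f x₀`; both strict inequalities persist for
`F (x, ξ₀)` and `f x` at all `x` near `x₀` by continuity. -/

open Set Filter Topology

theorem exists_mem_Ioo_of_mem_interior {S : Set ℝ} {y ε : ℝ} (hy : y ∈ interior S)
    (hε : 0 < ε) : ∃ z ∈ S, z ∈ Ioo (y - ε) y := by
  have hS : ∀ᶠ z in 𝓝[<] y, z ∈ S :=
    mem_nhdsWithin_of_mem_nhds (mem_interior_iff_mem_nhds.1 hy)
  exact (hS.and (Ioo_mem_nhdsLT (by linarith : y - ε < y))).exists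

theorem local_polynomial_approximation {n k : ℕ}
    (Ω : Set (EuclideanSpace ℝ (Fin n))) (hΩ : IsOpen Ω)
    (F : EuclideanSpace ℝ (Fin n) × (Fin k → ℝ) → ℝ)
    (hF : ContinuousOn F (Ω ×ˢ (univ : Set (Fin k → ℝ))))
    (f : EuclideanSpace ℝ (Fin n) → ℝ) (hf : ContinuousOn f Ω)
    (x₀ : EuclideanSpace ℝ (Fin n)) (hx₀ : x₀ ∈ Ω)
    (hint : f x₀ ∈ interior {y : ℝ | ∃ ξ : Fin k → ℝ, F (x₀, ξ) = y}) :
    ∀ ε > (0 : ℝ), ∃ δ > (0 : ℝ), ∃ P : Fin k → MvPolynomial (Fin n) ℝ,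
      ∀ x ∈ Ω, ‖x - x₀‖ ≤ δ →
        f x - ε ≤ F (x, fun i => MvPolynomial.eval (fun j => x j) (P i)) ∧
        F (x, fun i => MvPolynomial.eval (fun j => x j) (P i)) ≤ f x := by
  intro ε hε
  obtain ⟨_, ⟨ξ₀, rfl⟩, hlow, hup⟩ := exists_mem_Ioo_of_mem_interior hint hε
  have hFx : ContinuousAt (fun x => F (x, ξ₀)) x₀ :=
    (hF.continuousAt ((hΩ.prod isOpen_univ).mem_nhds ⟨hx₀, mem_univ _⟩)).comp
      (continuous_id.prodMk continuous_const).continuousAt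
  have hfx : ContinuousAt f x₀ := hf.continuousAt (hΩ.mem_nhds hx₀)
  have hnear : ∀ᶠ x in 𝓝 x₀, f x - ε < F (x, ξ₀) ∧ F (x, ξ₀) < f x :=
    ((hfx.sub continuousAt_const).eventually_lt hFx hlow).and (hFx.eventually_lt hfx hup)
  obtain ⟨δ, hδ, hball⟩ := Metric.nhds_basis_closedBall.eventually_iff.1 hnear
  refine ⟨δ, hδ, fun i => MvPolynomial.C (ξ₀ i), fun x _ hx => ?_⟩
  simp only [MvPolynomial.eval_C]
  obtain ⟨hlow, hup⟩ := hball (mem_closedBall_iff_norm.2 hx)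
  exact ⟨hlow.le, hup.le⟩
end

section
/- If f = [f̲, f̄] is a Hausdorff continuous interval-valued function on Ω, then the set Γ(f) = {x ∈ Ω : f̲(x) < f̄(x)} of points where f takes non-degenerate interval values is a set of first Baire category in Ω. -/
open Set Metric

/-- Lower Baire operator `I(f)`, on an open set `Ω` as a subtype. -/
noncomputable def lowerBaire {n : ℕ} {Ω : Set (EuclideanSpace ℝ (Fin n))}
    (f : Ω → EReal) : Ω → EReal :=
  fun x => ⨆ δ : {δ : ℝ // 0 < δ}, ⨅ y : (ball x δ.val : Set Ω), f y

/-- Upper Baire operator `S(f)`. -/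
noncomputable def upperBaire {n : ℕ} {Ω : Set (EuclideanSpace ℝ (Fin n))}
    (f : Ω → EReal) : Ω → EReal :=
  fun x => ⨅ δ : {δ : ℝ // 0 < δ}, ⨆ y : (ball x δ.val : Set Ω), f y

/-- An interval-valued function `f = [f₁, f₂]` is Hausdorff continuous iff for every
interval-valued function `g = [g₁, g₂]` contained pointwise in `f`, the graph completion
`F(g) = [I(g₁), S(g₂)]` equals `f`. -/
def HContinuous {n : ℕ} {Ω : Set (EuclideanSpace ℝ (Fin n))}
    (f₁ f₂ : Ω → EReal) : Prop :=
  ∀ g₁ g₂ : Ω → EReal, (∀ x, g₁ x ≤ g₂ x) → (∀ x, f₁ x ≤ g₁ x ∧ g₂ x ≤ f₂ x) →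
    lowerBaire g₁ = f₁ ∧ upperBaire g₂ = f₂

/-- The infimum over a smaller ball is at least the infimum over a bigger ball. -/
lemma iInf_ball_mono {n : ℕ} {Ω : Set (EuclideanSpace ℝ (Fin n))}
    (g : Ω → EReal) {x y : Ω} {δ ε : ℝ} (h : (ball y ε : Set Ω) ⊆ ball x δ) :
    (⨅ z : (ball x δ : Set Ω), g z) ≤ ⨅ z : (ball y ε : Set Ω), g z :=
  le_iInf fun z => iInf_le _ (⟨z.1, h z.2⟩ : (ball x δ : Set Ω))

lemma isOpen_lt_lowerBaire {n : ℕ} {Ω : Set (EuclideanSpace ℝ (Fin n))}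
    (g : Ω → EReal) (a : EReal) : IsOpen {x : Ω | a < lowerBaire g x} := by
  rw [Metric.isOpen_iff]
  intro x hx
  rw [mem_setOf_eq, lowerBaire, lt_iSup_iff] at hx
  obtain ⟨⟨δ, hδ⟩, hδlt⟩ := hx
  refine ⟨δ / 2, by linarith, fun y hy => ?_⟩
  have hsub : (ball y (δ / 2) : Set Ω) ⊆ ball x δ := fun z hz => by
    have h1 : dist z y < δ / 2 := hz
    have h2 : dist y x < δ / 2 := hy
    have := dist_triangle z y x
    simp only [mem_ball]; linarith
  have : a < ⨅ z : (ball y (δ / 2) : Set Ω), g z :=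
    lt_of_lt_of_le hδlt (iInf_ball_mono g hsub)
  exact lt_of_lt_of_le this (le_iSup (fun δ' : {δ' : ℝ // 0 < δ'} =>
    ⨅ z : (ball y δ'.val : Set Ω), g z) ⟨δ / 2, by linarith⟩)

lemma isOpen_upperBaire_lt {n : ℕ} {Ω : Set (EuclideanSpace ℝ (Fin n))}
    (g : Ω → EReal) (a : EReal) : IsOpen {x : Ω | upperBaire g x < a} := by
  rw [Metric.isOpen_iff]
  intro x hx
  rw [mem_setOf_eq, upperBaire, iInf_lt_iff] at hx
  obtain ⟨⟨δ, hδ⟩, hδlt⟩ := hx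
  refine ⟨δ / 2, by linarith, fun y hy => ?_⟩
  have hsub : (ball y (δ / 2) : Set Ω) ⊆ ball x δ := fun z hz => by
    have h1 : dist z y < δ / 2 := hz
    have h2 : dist y x < δ / 2 := hy
    have := dist_triangle z y x
    simp only [mem_ball]; linarith
  have hle : (⨆ z : (ball y (δ / 2) : Set Ω), g z) ≤ ⨆ z : (ball x δ : Set Ω), g z :=
    iSup_le fun z => le_iSup (fun w : (ball x δ : Set Ω) => g w) ⟨z.1, hsub z.2⟩
  have : (⨆ z : (ball y (δ / 2) : Set Ω), g z) < a := lt_of_le_of_lt hle hδlt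
  refine lt_of_le_of_lt ?_ this
  exact iInf_le (fun δ' : {δ' : ℝ // 0 < δ'} =>
    ⨆ z : (ball y δ'.val : Set Ω), g z) ⟨δ / 2, by linarith⟩

theorem hcontinuous_gamma_meagre {n : ℕ}
    (Ω : Set (EuclideanSpace ℝ (Fin n))) (hΩ : IsOpen Ω)
    (f₁ f₂ : Ω → EReal) (hle : ∀ x, f₁ x ≤ f₂ x) (hf : HContinuous f₁ f₂) :
    IsMeagre {x : Ω | f₁ x < f₂ x} := by
  -- From H-continuity, `lowerBaire f₂ = f₁`.
  obtain ⟨hL, -⟩ := hf f₂ f₂ (fun _ => le_rfl) (fun x => ⟨hle x, le_rfl⟩)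
  obtain ⟨hLf₁, -⟩ := hf f₁ f₂ hle (fun x => ⟨le_rfl, le_rfl⟩)
  obtain ⟨-, hUf₂⟩ := hf f₁ f₂ hle (fun x => ⟨le_rfl, le_rfl⟩)
  -- `f₁` is lower semicontinuous and `f₂` is upper semicontinuous.
  have hf₁lsc : ∀ a : EReal, IsOpen {x : Ω | a < f₁ x} := by
    intro a
    have := isOpen_lt_lowerBaire f₁ a
    rwa [hLf₁] at this
  have hf₂usc : ∀ a : EReal, IsOpen {x : Ω | f₂ x < a} := by
    intro a
    have := isOpen_upperBaire_lt f₂ a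
    rwa [hUf₂] at this
  -- The closed sets covering Γ(f).
  set E : ℚ × ℚ → Set Ω := fun r =>
    {x : Ω | f₁ x ≤ ((r.1 : ℝ) : EReal)} ∩ {x : Ω | ((r.2 : ℝ) : EReal) ≤ f₂ x} with hE
  have hEclosed : ∀ r, IsClosed (E r) := by
    intro r
    apply IsClosed.inter
    · have : {x : Ω | f₁ x ≤ ((r.1 : ℝ) : EReal)} = {x : Ω | ((r.1 : ℝ) : EReal) < f₁ x}ᶜ := by
        ext x; simp [not_lt]
      rw [this]
      exact (hf₁lsc _).isClosed_compl
    · have : {x : Ω | ((r.2 : ℝ) : EReal) ≤ f₂ x} = {x : Ω | f₂ x < ((r.2 : ℝ) : EReal)}ᶜ := by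
        ext x; simp [not_lt]
      rw [this]
      exact (hf₂usc _).isClosed_compl
  have hEnwd : ∀ r : ℚ × ℚ, r.1 < r.2 → IsNowhereDense (E r) := by
    intro r hr
    rw [(hEclosed r).isNowhereDense_iff]
    rw [eq_empty_iff_forall_notMem]
    intro x hx
    obtain ⟨ε, hε, hball⟩ := Metric.isOpen_iff.1 isOpen_interior x hx
    have hball' : (ball x ε : Set Ω) ⊆ E r := hball.trans interior_subset
    -- then `f₁ x = lowerBaire f₂ x ≥ r.2 > r.1 ≥ f₁ x`, contradiction
    have h1 : ((r.2 : ℝ) : EReal) ≤ ⨅ y : (ball x ε : Set Ω), f₂ y :=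
      le_iInf fun y => (hball' y.2).2
    have h2 : (⨅ y : (ball x ε : Set Ω), f₂ y) ≤ lowerBaire f₂ x :=
      le_iSup (fun δ' : {δ' : ℝ // 0 < δ'} =>
        ⨅ y : (ball x δ'.val : Set Ω), f₂ y) ⟨ε, hε⟩
    have h3 : ((r.2 : ℝ) : EReal) ≤ f₁ x := by rw [← hL]; exact h1.trans h2
    have h4 : f₁ x ≤ ((r.1 : ℝ) : EReal) := (interior_subset hx).1
    have : ((r.2 : ℝ) : EReal) ≤ ((r.1 : ℝ) : EReal) := h3.trans h4
    exact absurd hr (by exact_mod_cast not_lt.2 this)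
  -- cover Γ(f) by the E r with r.1 < r.2
  rw [isMeagre_iff_countable_union_isNowhereDense]
  refine ⟨E '' {r : ℚ × ℚ | r.1 < r.2}, ?_, ?_, ?_⟩
  · rintro t ⟨r, hr, rfl⟩
    exact hEnwd r hr
  · exact (Set.to_countable _).image E
  · intro x hx
    obtain ⟨p, hp1, hp2⟩ := EReal.exists_rat_btwn_of_lt hx
    obtain ⟨q, hq1, hq2⟩ := EReal.exists_rat_btwn_of_lt hp2
    refine mem_sUnion.2 ⟨E (p, q), ⟨(p, q), by exact_mod_cast hq1, rfl⟩, ?_⟩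
    exact ⟨hp1.le, hq2.le⟩
end

section
/- Two Hausdorff continuous interval-valued functions on Ω that coincide on a dense subset D ⊆ Ω coincide on all of Ω. -/
open Set Metric

section Aux

variable {n : ℕ} {Ω : Set (EuclideanSpace ℝ (Fin n))} {D : Set Ω}

/-- For a "lower semicontinuous" `f` (fixed by `lowerBaire`), the sup over a ball equals
the sup over the dense part of the ball. -/
lemma sup_ball_eq_sup_ball_inter (hD : Dense D) (f : Ω → EReal)
    (hf : lowerBaire f = f) (x : Ω) (δ : ℝ) (hδ : 0 < δ) :
    (⨆ y : (ball x δ : Set Ω), f y) = ⨆ y : (ball x δ ∩ D : Set Ω), f y := by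
  refine le_antisymm ?_ (iSup_le fun y => le_iSup_of_le ⟨y.1, y.2.1⟩ le_rfl)
  refine iSup_le fun y => ?_
  have hy : f y.1 = ⨆ ε : {ε : ℝ // 0 < ε}, ⨅ z : (ball y.1 ε.val : Set Ω), f z := by
    conv_lhs => rw [← hf]
    rfl
  rw [hy]
  refine iSup_le fun ε => ?_
  -- pick a point of D in ball y (min ε (δ - dist y x))
  have hpos : 0 < min ε.val (δ - dist y.1 x) := by
    have := y.2
    rw [mem_ball] at this
    exact lt_min ε.2 (by linarith)
  obtain ⟨d, hd1, hd2⟩ := Metric.dense_iff.mp hD y.1 _ hpos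
  have hdε : d ∈ ball y.1 ε.val :=
    mem_ball.mpr (lt_of_lt_of_le (mem_ball.mp hd1) (min_le_left _ _))
  have hdx : d ∈ ball x δ := by
    rw [mem_ball] at *
    have h1 : dist d y.1 < δ - dist y.1 x :=
      lt_of_lt_of_le hd1 (min_le_right _ _)
    calc dist d x ≤ dist d y.1 + dist y.1 x := dist_triangle _ _ _
      _ < δ := by linarith
  exact le_trans (iInf_le _ (⟨d, hdε⟩ : (ball y.1 ε.val : Set Ω)))
    (le_iSup_of_le ⟨d, hdx, hd2⟩ le_rfl)

/-- Dual: for an "upper semicontinuous" `f`, the inf over a ball equals the inf over the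
dense part of the ball. -/
lemma inf_ball_eq_inf_ball_inter (hD : Dense D) (f : Ω → EReal)
    (hf : upperBaire f = f) (x : Ω) (δ : ℝ) (hδ : 0 < δ) :
    (⨅ y : (ball x δ : Set Ω), f y) = ⨅ y : (ball x δ ∩ D : Set Ω), f y := by
  refine le_antisymm (le_iInf fun y => iInf_le_of_le ⟨y.1, y.2.1⟩ le_rfl) ?_
  refine le_iInf fun y => ?_
  have hy : f y.1 = ⨅ ε : {ε : ℝ // 0 < ε}, ⨆ z : (ball y.1 ε.val : Set Ω), f z := by
    conv_lhs => rw [← hf]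
    rfl
  rw [hy]
  refine le_iInf fun ε => ?_
  have hpos : 0 < min ε.val (δ - dist y.1 x) := by
    have := y.2
    rw [mem_ball] at this
    exact lt_min ε.2 (by linarith)
  obtain ⟨d, hd1, hd2⟩ := Metric.dense_iff.mp hD y.1 _ hpos
  have hdε : d ∈ ball y.1 ε.val :=
    mem_ball.mpr (lt_of_lt_of_le (mem_ball.mp hd1) (min_le_left _ _))
  have hdx : d ∈ ball x δ := by
    rw [mem_ball] at *
    have h1 : dist d y.1 < δ - dist y.1 x :=
      lt_of_lt_of_le hd1 (min_le_right _ _)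
    calc dist d x ≤ dist d y.1 + dist y.1 x := dist_triangle _ _ _
      _ < δ := by linarith
  exact le_trans (iInf_le_of_le ⟨d, hdx, hd2⟩ le_rfl)
    (le_iSup_of_le (⟨d, hdε⟩ : (ball y.1 ε.val : Set Ω)) le_rfl)

lemma upperBaire_eq_of_eqOn (hD : Dense D) (f g : Ω → EReal)
    (hf : lowerBaire f = f) (hg : lowerBaire g = g)
    (h : ∀ x ∈ D, f x = g x) : upperBaire f = upperBaire g := by
  funext x
  unfold upperBaire
  refine iInf_congr fun δ => ?_
  rw [sup_ball_eq_sup_ball_inter hD f hf x δ.val δ.2,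
    sup_ball_eq_sup_ball_inter hD g hg x δ.val δ.2]
  exact iSup_congr fun y => h y.1 y.2.2

lemma lowerBaire_eq_of_eqOn (hD : Dense D) (f g : Ω → EReal)
    (hf : upperBaire f = f) (hg : upperBaire g = g)
    (h : ∀ x ∈ D, f x = g x) : lowerBaire f = lowerBaire g := by
  funext x
  unfold lowerBaire
  refine iSup_congr fun δ => ?_
  rw [inf_ball_eq_inf_ball_inter hD f hf x δ.val δ.2,
    inf_ball_eq_inf_ball_inter hD g hg x δ.val δ.2]
  exact iInf_congr fun y => h y.1 y.2.2

end Aux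

theorem hcontinuous_eq_of_eqOn_dense {n : ℕ}
    (Ω : Set (EuclideanSpace ℝ (Fin n))) (hΩ : IsOpen Ω)
    (D : Set Ω) (hD : Dense D)
    (f₁ f₂ g₁ g₂ : Ω → EReal)
    (hfle : ∀ x, f₁ x ≤ f₂ x) (hgle : ∀ x, g₁ x ≤ g₂ x)
    (hf : HContinuous f₁ f₂) (hg : HContinuous g₁ g₂)
    (heq : ∀ x ∈ D, f₁ x = g₁ x ∧ f₂ x = g₂ x) :
    f₁ = g₁ ∧ f₂ = g₂ := by
  obtain ⟨hf1, -⟩ := hf f₁ f₂ hfle (fun x => ⟨le_rfl, le_rfl⟩)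
  obtain ⟨hf2, hf3⟩ := hf f₂ f₂ (fun x => le_rfl) (fun x => ⟨hfle x, le_rfl⟩)
  obtain ⟨-, hf4⟩ := hf f₁ f₁ (fun x => le_rfl) (fun x => ⟨le_rfl, hfle x⟩)
  obtain ⟨hg1, -⟩ := hg g₁ g₂ hgle (fun x => ⟨le_rfl, le_rfl⟩)
  obtain ⟨hg2, hg3⟩ := hg g₂ g₂ (fun x => le_rfl) (fun x => ⟨hgle x, le_rfl⟩)
  obtain ⟨-, hg4⟩ := hg g₁ g₁ (fun x => le_rfl) (fun x => ⟨le_rfl, hgle x⟩)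
  -- hf1 : lowerBaire f₁ = f₁, hf3 : upperBaire f₂ = f₂,
  -- hf4 : upperBaire f₁ = f₂, hf2 : lowerBaire f₂ = f₁
  have h2 : f₂ = g₂ := by
    rw [← hf4, ← hg4]
    exact upperBaire_eq_of_eqOn hD f₁ g₁ hf1 hg1 (fun x hx => (heq x hx).1)
  have h1 : f₁ = g₁ := by
    rw [← hf2, ← hg2]
    exact lowerBaire_eq_of_eqOn hD f₂ g₂ hf3 hg3 (fun x hx => (heq x hx).2)
  exact ⟨h1, h2⟩
end

section
/- For a Hausdorff continuous function f = [f̲, f̄] on Ω and a point x ∈ Ω, the following are equivalent: (i) f̲(x) < f̄(x); (ii) both f̲ and f̄ are discontinuous at x; (iii) at least one of f̲, f̄ is discontinuous at x. -/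
open Set Metric

section Aux

variable {n : ℕ} {Ω : Set (EuclideanSpace ℝ (Fin n))}

lemma lowerBaire_le (f : Ω → EReal) (x : Ω) : lowerBaire f x ≤ f x :=
  iSup_le fun δ => iInf_le_of_le ⟨x, mem_ball_self δ.2⟩ le_rfl

lemma le_upperBaire (f : Ω → EReal) (x : Ω) : f x ≤ upperBaire f x :=
  le_iInf fun δ => le_iSup_of_le ⟨x, mem_ball_self δ.2⟩ le_rfl

lemma lowerBaire_eq_of_continuousAt {f : Ω → EReal} {x : Ω} (h : ContinuousAt f x) :
    lowerBaire f x = f x := by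
  refine le_antisymm (lowerBaire_le f x) ?_
  by_contra hc
  push_neg at hc
  obtain ⟨a, ha1, ha2⟩ := exists_between hc
  have hev : ∀ᶠ y in nhds x, a < f y := h.eventually_const_lt ha2
  rw [Metric.eventually_nhds_iff_ball] at hev
  obtain ⟨ε, hε, hball⟩ := hev
  have h1 : a ≤ ⨅ y : (ball x ε : Set Ω), f y := le_iInf fun y => (hball y y.2).le
  have h2 : (⨅ y : (ball x ε : Set Ω), f y) ≤ lowerBaire f x :=
    le_iSup (fun δ : {δ : ℝ // 0 < δ} => ⨅ y : (ball x δ.val : Set Ω), f y) ⟨ε, hε⟩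
  have : a ≤ lowerBaire f x := le_trans h1 h2
  exact absurd this (not_le.mpr ha1)

lemma upperBaire_eq_of_continuousAt {f : Ω → EReal} {x : Ω} (h : ContinuousAt f x) :
    upperBaire f x = f x := by
  refine le_antisymm ?_ (le_upperBaire f x)
  by_contra hc
  push_neg at hc
  obtain ⟨a, ha1, ha2⟩ := exists_between hc
  have hev : ∀ᶠ y in nhds x, f y < a := h.eventually_lt_const ha1
  rw [Metric.eventually_nhds_iff_ball] at hev
  obtain ⟨ε, hε, hball⟩ := hev
  have h1 : (⨆ y : (ball x ε : Set Ω), f y) ≤ a := iSup_le fun y => (hball y y.2).le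
  have h2 : upperBaire f x ≤ ⨆ y : (ball x ε : Set Ω), f y :=
    iInf_le (fun δ : {δ : ℝ // 0 < δ} => ⨆ y : (ball x δ.val : Set Ω), f y) ⟨ε, hε⟩
  have : upperBaire f x ≤ a := le_trans h2 h1
  exact absurd this (not_le.mpr ha2)

lemma continuousAt_of_baire {f : Ω → EReal} {x : Ω}
    (h1 : lowerBaire f x = f x) (h2 : upperBaire f x = f x) : ContinuousAt f x := by
  rw [ContinuousAt, tendsto_order]
  constructor
  · intro a ha
    rw [← h1, lowerBaire, lt_iSup_iff] at ha
    obtain ⟨δ, hδ⟩ := ha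
    filter_upwards [Metric.ball_mem_nhds x δ.2] with y hy
    exact lt_of_lt_of_le hδ (iInf_le _ (⟨y, hy⟩ : (ball x δ.val : Set Ω)))
  · intro a ha
    have ha : upperBaire f x < a := h2 ▸ ha
    rw [upperBaire, iInf_lt_iff] at ha
    obtain ⟨δ, hδ⟩ := ha
    filter_upwards [Metric.ball_mem_nhds x δ.2] with y hy
    exact lt_of_le_of_lt (le_iSup (fun z : (ball x δ.val : Set Ω) => f z) (⟨y, hy⟩ : (ball x δ.val : Set Ω))) hδ

end Aux

theorem hcontinuous_discontinuity_tfae {n : ℕ}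
    (Ω : Set (EuclideanSpace ℝ (Fin n))) (hΩ : IsOpen Ω)
    (f₁ f₂ : Ω → EReal) (hle : ∀ x, f₁ x ≤ f₂ x) (hf : HContinuous f₁ f₂)
    (x : Ω) :
    (f₁ x < f₂ x ↔ (¬ ContinuousAt f₁ x ∧ ¬ ContinuousAt f₂ x)) ∧
    (f₁ x < f₂ x ↔ (¬ ContinuousAt f₁ x ∨ ¬ ContinuousAt f₂ x)) := by
  obtain ⟨hL1, hU2⟩ := hf f₁ f₂ hle (fun y => ⟨le_rfl, le_rfl⟩)
  obtain ⟨hL2, _⟩ := hf f₂ f₂ (fun y => le_rfl) (fun y => ⟨hle y, le_rfl⟩)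
  obtain ⟨_, hU1⟩ := hf f₁ f₁ (fun y => le_rfl) (fun y => ⟨le_rfl, hle y⟩)
  -- lt → both discontinuous
  have hA : f₁ x < f₂ x → ¬ ContinuousAt f₁ x ∧ ¬ ContinuousAt f₂ x := by
    intro hlt
    constructor
    · intro hc
      have := upperBaire_eq_of_continuousAt hc
      rw [congrFun hU1 x] at this
      exact absurd this (ne_of_gt hlt)
    · intro hc
      have := lowerBaire_eq_of_continuousAt hc
      rw [congrFun hL2 x] at this
      exact absurd this (ne_of_lt hlt)
  -- eq → both continuous
  have hB : f₁ x = f₂ x → ContinuousAt f₁ x ∧ ContinuousAt f₂ x := by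
    intro heq
    constructor
    · refine continuousAt_of_baire (congrFun hL1 x) ?_
      rw [congrFun hU1 x, heq]
    · refine continuousAt_of_baire ?_ (congrFun hU2 x)
      rw [congrFun hL2 x, heq]
  have hlt_iff : f₁ x < f₂ x ↔ f₁ x ≠ f₂ x := lt_iff_le_and_ne.trans ⟨fun h => h.2, fun h => ⟨hle x, h⟩⟩
  constructor
  · exact ⟨hA, fun h => hlt_iff.mpr fun heq => h.1 (hB heq).1⟩
  · refine ⟨fun h => Or.inl (hA h).1, fun h => hlt_iff.mpr fun heq => ?_⟩
    rcases h with h | h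
    · exact h (hB heq).1
    · exact h (hB heq).2
end
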